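/- Consider ẋ = W·Sat(x) - x with W = w₁₁I + w₁₂J and w₁₁ > 1, |w₁₂| > w₁₁ - 1. Then the system has no equilibrium other than the origin: in each saturated or partially saturated region the candidate affine fixed point fails to lie in that region, and the origin is an unstable focus of the central linear region. -/
import Mathlib


/-- The saturation function. -/
noncomputable def satur (u : ℝ) : ℝ := max (-1) (min 1 u)

private lemma satur_key (u : ℝ) : satur u * (u - satur u) = |u - satur u| := by
  unfold satur
  rcases le_total u (-1) with h | h
  · rw [min_eq_right (by linarith : u ≤ 1), max_eq_left h,
      show u - -1 = u + 1 by ring, abs_of_nonpos (by linarith)]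
    ring
  · rcases le_total 1 u with h2 | h2
    · rw [min_eq_left h2, max_eq_right (by norm_num : (-1:ℝ) ≤ 1),
        abs_of_nonneg (by linarith)]
      ring
    · rw [min_eq_right h2, max_eq_right h]
      simp

private lemma abs_satur_le (u : ℝ) : |satur u| ≤ 1 := by
  unfold satur
  rw [abs_le]
  exact ⟨le_max_left _ _, max_le (by norm_num) (min_le_left _ _)⟩

private lemma satur_zero (u : ℝ) (h : satur u = 0) : u = 0 := by
  unfold satur at h
  rcases le_total u (-1) with h1 | h1
  · rw [min_eq_right (by linarith : u ≤ 1), max_eq_left h1] at h; linarith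
  · rcases le_total 1 u with h2 | h2
    · rw [min_eq_left h2, max_eq_right (by norm_num : (-1:ℝ) ≤ 1)] at h; linarith
    · rwa [min_eq_right h2, max_eq_right h1] at h

/-- The planar vector field `f(x) = W·Sat(x) - x` with `W = w₁₁I + w₁₂J`. -/
noncomputable def satField (w11 w12 : ℝ) (x : ℝ × ℝ) : ℝ × ℝ :=
  (w11 * satur x.1 + w12 * satur x.2 - x.1, -w12 * satur x.1 + w11 * satur x.2 - x.2)

/-- For `w₁₁ > 1` and `|w₁₂| > w₁₁ - 1`, the origin is the only
equilibrium of `ẋ = W·Sat(x) - x`, and it is an unstable focus of the central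
linear region: the squared norm strictly increases along the central linear field. -/
theorem unique_equilibrium_limit_cycle_case (w11 w12 : ℝ)
    (hw11 : 1 < w11) (hw12 : w11 - 1 < |w12|) :
    (∀ x : ℝ × ℝ, satField w11 w12 x = 0 ↔ x = 0) ∧
    (∀ x : ℝ × ℝ, x ≠ 0 →
      0 < 2 * (x.1 * ((w11 - 1) * x.1 + w12 * x.2) +
               x.2 * (-w12 * x.1 + (w11 - 1) * x.2))) := by
  constructor
  · intro x
    constructor
    · intro h
      rw [Prod.ext_iff] at h
      simp only [satField] at h
      obtain ⟨h1, h2⟩ := h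
      set s1 := satur x.1 with hs1def
      set s2 := satur x.2 with hs2def
      have e1 : x.1 - s1 = (w11 - 1) * s1 + w12 * s2 := by
        simp only [Prod.fst_zero] at h1; linarith
      have e2 : x.2 - s2 = -w12 * s1 + (w11 - 1) * s2 := by
        simp only [Prod.snd_zero] at h2; linarith
      have k1 := satur_key x.1
      have k2 := satur_key x.2
      rw [← hs1def] at k1
      rw [← hs2def] at k2
      have a1 := abs_satur_le x.1
      have a2 := abs_satur_le x.2
      rw [← hs1def] at a1
      rw [← hs2def] at a2
      have hs : (w11 - 1) * (s1 ^ 2 + s2 ^ 2) = |x.1 - s1| + |x.2 - s2| := by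
        rw [← k1, ← k2, e1, e2]; ring
      have hc : w12 * (s1 ^ 2 + s2 ^ 2) = s2 * (x.1 - s1) - s1 * (x.2 - s2) := by
        rw [e1, e2]; ring
      have hnn : (0:ℝ) ≤ s1 ^ 2 + s2 ^ 2 := by positivity
      have hb : |s2 * (x.1 - s1) - s1 * (x.2 - s2)| ≤ |x.1 - s1| + |x.2 - s2| := by
        calc |s2 * (x.1 - s1) - s1 * (x.2 - s2)|
            ≤ |s2 * (x.1 - s1)| + |s1 * (x.2 - s2)| := abs_sub _ _
          _ = |s2| * |x.1 - s1| + |s1| * |x.2 - s2| := by rw [abs_mul, abs_mul]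
          _ ≤ |x.1 - s1| + |x.2 - s2| :=
              add_le_add (mul_le_of_le_one_left (abs_nonneg _) a2)
                (mul_le_of_le_one_left (abs_nonneg _) a1)
      have hle : |w12| * (s1 ^ 2 + s2 ^ 2) ≤ (w11 - 1) * (s1 ^ 2 + s2 ^ 2) := by
        calc |w12| * (s1 ^ 2 + s2 ^ 2) = |w12 * (s1 ^ 2 + s2 ^ 2)| := by
              rw [abs_mul, abs_of_nonneg hnn]
          _ = |s2 * (x.1 - s1) - s1 * (x.2 - s2)| := by rw [hc]
          _ ≤ |x.1 - s1| + |x.2 - s2| := hb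
          _ = (w11 - 1) * (s1 ^ 2 + s2 ^ 2) := hs.symm
      have hzero : s1 ^ 2 + s2 ^ 2 = 0 := by nlinarith
      have hx1 : x.1 = 0 := satur_zero _ (by rw [← hs1def]; nlinarith)
      have hx2 : x.2 = 0 := satur_zero _ (by rw [← hs2def]; nlinarith)
      exact Prod.ext_iff.mpr ⟨hx1, hx2⟩
    · rintro rfl
      simp [satField, satur]
  · intro x hx
    have hx' : x.1 ≠ 0 ∨ x.2 ≠ 0 := by
      by_contra hc
      push_neg at hc
      exact hx (Prod.ext_iff.mpr ⟨hc.1, hc.2⟩)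
    have hpos : 0 < x.1 ^ 2 + x.2 ^ 2 := by
      rcases hx' with h | h
      · have : 0 < x.1 ^ 2 := by positivity
        nlinarith [sq_nonneg x.2]
      · have : 0 < x.2 ^ 2 := by positivity
        nlinarith [sq_nonneg x.1]
    nlinarith [sq_nonneg x.1, sq_nonneg x.2]
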